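/- Let 2 ≤ r < s be integers with 2r > s and s even. Then the minimum order n_bb(r,s;4) of a balanced biregular graph of girth 4 with degrees r and s equals 2s. -/

import Mathlib

open SimpleGraph Set

/-- The degree of a vertex, via the natural cardinality of its neighbor set. -/
noncomputable def deg {V : Type*} (G : SimpleGraph V) (v : V) : ℕ :=
  (G.neighborSet v).ncard

/-- Number of edges both of whose endpoints have degree `d`. -/
noncomputable def edgeCountDeg {V : Type*} (G : SimpleGraph V) (d : ℕ) : ℕ :=
  {e ∈ G.edgeSet | ∀ v ∈ e, deg G v = d}.ncard

/-- An `(r,s;g)`-balanced biregular graph: girth `g`, degree set exactly `{r, s}`,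
and equally many vertices of degree `r` as of degree `s`. -/
def IsBabi {V : Type*} (r s g : ℕ) (G : SimpleGraph V) : Prop :=
  G.girth = g ∧ (∀ v, deg G v = r ∨ deg G v = s) ∧
  (∃ v, deg G v = r) ∧ (∃ v, deg G v = s) ∧
  {v | deg G v = r}.ncard = {v | deg G v = s}.ncard

/-! The lower bound uses only that girth 4 forbids triangles. If two vertices of degree `s` are
adjacent, their neighbourhoods are disjoint, so there are at least `2s` vertices. Otherwise the set
`T` of degree-`s` vertices is independent, and counting the edges leaving `T` gives
`|T| s ≤ |Tᶜ| r = |T| r`, impossible since `r < s`.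

For the construction write `s = 2t` and `r = t + k` with `0 < k < t`. On each of two sides put `t`
vertices joined to the whole other side, and `t` vertices indexed by `ZMod t`, where `i` and `j` on
opposite sides are also joined when `(i + j).val < k`. The result is bipartite, contains a 4-cycle
through four vertices of the first kind, and has `2t` vertices of degree `2t` and `2t` of degree
`t + k`. -/

namespace SimpleGraph

variable {V W : Type*} {G : SimpleGraph V} {G' : SimpleGraph W}

lemma Iso.deg_apply (f : G ≃g G') (v : V) : deg G' (f v) = deg G v := by
  rw [deg, ← f.image_neighborSet, Set.ncard_image_of_injective _ f.injective, deg]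

lemma Iso.isBabi {r s g : ℕ} (f : G ≃g G') (hG : IsBabi r s g G) : IsBabi r s g G' := by
  obtain ⟨hgirth, hdeg, ⟨u, hu⟩, ⟨v, hv⟩, hbal⟩ := hG
  have hset (d : ℕ) : {w | deg G' w = d} = f '' {w | deg G w = d} := by
    ext w
    obtain ⟨w, rfl⟩ := f.surjective w
    simp [f.deg_apply, f.injective.eq_iff]
  refine ⟨f.girth_eq ▸ hgirth, fun w => ?_, ⟨f u, ?_⟩, ⟨f v, ?_⟩, ?_⟩
  · obtain ⟨w, rfl⟩ := f.surjective w
    simpa [f.deg_apply] using hdeg w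
  · rwa [f.deg_apply]
  · rwa [f.deg_apply]
  · rwa [hset, hset, Set.ncard_image_of_injective _ f.injective,
      Set.ncard_image_of_injective _ f.injective]

lemma cliqueFree_three_of_three_lt_girth (h : 3 < G.girth) : G.CliqueFree 3 := by
  intro S hS
  obtain ⟨a, w, hw, hl⟩ := is3Clique_iff_exists_cycle_length_three.mp ⟨S, hS⟩
  have := girth_le_length hw
  omega

lemma girth_eq_four {a b c d : V} (hG : G.CliqueFree 3) (hab : G.Adj a b) (hbc : G.Adj b c)
    (hcd : G.Adj c d) (hda : G.Adj d a) (hac : a ≠ c) (hbd : b ≠ d) : G.girth = 4 := by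
  have hcycle : (Walk.cons hab (.cons hbc (.cons hcd (.cons hda .nil)))).IsCycle := by
    simp [Walk.cons_isCycle_iff, hab.ne, hbc.ne, hcd.ne, hda.ne, hac, hbd, hac.symm,
      hab.ne.symm, hda.ne.symm]
  obtain ⟨x, w, hw, hgirth⟩ := exists_girth_eq_length.mpr fun hacyc => hacyc _ hcycle
  have hw3 : w.length ≠ 3 := fun hl =>
    let ⟨S, hS⟩ := is3Clique_iff_exists_cycle_length_three.mpr ⟨x, w, hw, hl⟩
    hG S hS
  have hle := girth_le_length hcycle
  have := hw.three_le_length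
  simp only [Walk.length_cons, Walk.length_nil] at hle
  omega

section Finite

variable [Fintype V]

lemma deg_eq_degree [DecidableRel G.Adj] (v : V) : deg G v = G.degree v := by
  rw [deg, Set.ncard_eq_toFinset_card', ← card_neighborFinset_eq_degree, neighborFinset]

lemma degree_add_degree_le_card [DecidableRel G.Adj] (hG : G.CliqueFree 3) {u v : V}
    (h : G.Adj u v) : G.degree u + G.degree v ≤ Fintype.card V := by
  classical
  have hdisj : Disjoint (G.neighborFinset u) (G.neighborFinset v) :=
    Finset.disjoint_left.mpr fun w hu hv =>
      hG {u, v, w} (is3Clique_triple_iff.mpr ⟨h, by simpa using hu, by simpa using hv⟩)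
  rw [← card_neighborFinset_eq_degree, ← card_neighborFinset_eq_degree,
    ← Finset.card_union_of_disjoint hdisj]
  exact Finset.card_le_univ _

lemma sum_degree_le_sum_degree_compl [DecidableEq V] [DecidableRel G.Adj] {T : Finset V}
    (hT : G.IsIndepSet T) : ∑ v ∈ T, G.degree v ≤ ∑ w ∈ Tᶜ, G.degree w := by
  have hnbr (v) (hv : v ∈ T) : G.neighborFinset v = Finset.bipartiteAbove G.Adj Tᶜ v := by
    ext w
    simp only [mem_neighborFinset, Finset.bipartiteAbove, Finset.mem_filter, Finset.mem_compl,
      iff_and_self]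
    exact fun hvw hw => hT hv hw hvw.ne hvw
  calc ∑ v ∈ T, G.degree v = ∑ v ∈ T, (Finset.bipartiteAbove G.Adj Tᶜ v).card := by
        refine Finset.sum_congr rfl fun v hv => ?_
        rw [← card_neighborFinset_eq_degree, hnbr v hv]
    _ = ∑ w ∈ Tᶜ, (Finset.bipartiteBelow G.Adj T w).card :=
        Finset.sum_card_bipartiteAbove_eq_sum_card_bipartiteBelow _
    _ ≤ ∑ w ∈ Tᶜ, G.degree w := by
        refine Finset.sum_le_sum fun w _ => ?_
        rw [← card_neighborFinset_eq_degree]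
        refine Finset.card_le_card fun v hv => ?_
        simp only [Finset.bipartiteBelow, Finset.mem_filter] at hv
        exact (mem_neighborFinset _ _ _).mpr hv.2.symm

lemma IsBabi.two_mul_le_card {r s : ℕ} (hrs : r < s) (hG : IsBabi r s 4 G) :
    2 * s ≤ Fintype.card V := by
  classical
  obtain ⟨hgirth, hdeg, -, ⟨v, hv⟩, hbal⟩ := hG
  simp only [deg_eq_degree] at hdeg hv hbal
  set T := Finset.univ.filter fun v => G.degree v = s
  by_cases hT : G.IsIndepSet T
  · have hTc : Tᶜ = Finset.univ.filter fun v => G.degree v = r := by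
      ext w
      have := hdeg w
      simp only [T, Finset.mem_compl, Finset.mem_filter, Finset.mem_univ, true_and]
      omega
    have hcard : Tᶜ.card = T.card := by
      rw [hTc]
      simpa only [Set.ncard_eq_toFinset_card', Set.toFinset_ofPred] using hbal
    have hsT : ∑ w ∈ T, G.degree w = T.card * s :=
      Finset.sum_const_nat fun w hw => (Finset.mem_filter.mp hw).2
    have hsTc : ∑ w ∈ Tᶜ, G.degree w = T.card * r := by
      rw [← hcard]
      refine Finset.sum_const_nat fun w hw => ?_
      rw [hTc, Finset.mem_filter] at hw
      exact hw.2
    have hpos : 0 < T.card := Finset.card_pos.mpr ⟨v, by simp [T, hv]⟩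
    have := sum_degree_le_sum_degree_compl hT
    rw [hsT, hsTc] at this
    exact absurd this (not_le.mpr (Nat.mul_lt_mul_of_pos_left hrs hpos))
  · obtain ⟨u, hu, w, hw, -, huw⟩ : ∃ u ∈ T, ∃ w ∈ T, u ≠ w ∧ G.Adj u w := by
      simpa [IsIndepSet, Set.Pairwise] using hT
    have := degree_add_degree_le_card (cliqueFree_three_of_three_lt_girth (by omega)) huw
    simp only [T, Finset.mem_filter] at hu hw
    omega

end Finite

/-- A vertex `(side, high, i)`; the `high` vertices are joined to the whole other side. -/
def babiGraph (t k : ℕ) : SimpleGraph (Bool × Bool × ZMod t) where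
  Adj p q := p.1 ≠ q.1 ∧ (p.2.1 ∨ q.2.1 ∨ (p.2.2 + q.2.2).val < k)
  symm := ⟨fun p q h => ⟨h.1.symm, by rw [add_comm]; tauto⟩⟩
  loopless := ⟨fun p h => h.1 rfl⟩

@[simp]
lemma babiGraph_adj {t k : ℕ} {p q : Bool × Bool × ZMod t} :
    (babiGraph t k).Adj p q ↔ p.1 ≠ q.1 ∧ (p.2.1 ∨ q.2.1 ∨ (p.2.2 + q.2.2).val < k) :=
  Iff.rfl

instance {t k : ℕ} : DecidableRel (babiGraph t k).Adj := fun p q => by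
  unfold babiGraph; infer_instance

section babiGraph

variable {t k : ℕ} [NeZero t]

lemma card_filter_val_add_lt (hk : k ≤ t) (i : ZMod t) :
    (Finset.univ.filter fun j : ZMod t => (i + j).val < k).card = k := by
  rw [Finset.card_equiv (Equiv.addLeft i) (t := Finset.univ.filter fun j : ZMod t => j.val < k)
    (by simp)]
  -- `ZMod (n + 1)` is `Fin (n + 1)` by definition
  obtain ⟨n, rfl⟩ : ∃ n, t = n + 1 := Nat.exists_eq_add_one.mpr (NeZero.pos t)
  exact Fin.card_filter_val_lt.trans (min_eq_right hk)

lemma degree_babiGraph (hk : k ≤ t) (p : Bool × Bool × ZMod t) :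
    (babiGraph t k).degree p = if p.2.1 then 2 * t else t + k := by
  obtain ⟨a, h, i⟩ := p
  have hnbr : (babiGraph t k).neighborFinset (a, h, i) =
      (Finset.univ.filter fun x : Bool × ZMod t => h ∨ x.1 ∨ (i + x.2).val < k).map
        (Function.Embedding.sectR (!a) _) := by
    ext ⟨b, h', j⟩
    cases a <;> cases b <;> simp
  rw [← card_neighborFinset_eq_degree, hnbr, Finset.card_map, Finset.card_filter,
    Fintype.sum_prod_type, Fintype.sum_bool]
  cases h <;> simp [card_filter_val_add_lt hk, two_mul]

lemma isBabi_babiGraph (ht : 2 ≤ t) (hkt : k < t) :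
    IsBabi (t + k) (2 * t) 4 (babiGraph t k) := by
  have hdeg (p : Bool × Bool × ZMod t) :
      deg (babiGraph t k) p = if p.2.1 then 2 * t else t + k := by
    rw [deg_eq_degree, degree_babiGraph hkt.le]
  have hbip : (babiGraph t k).CliqueFree 3 :=
    (Coloring.mk (fun p => p.1) fun {_ _} (h : (babiGraph t k).Adj _ _) => h.1).colorable.cliqueFree
      (by simp)
  have h01 : (0 : ZMod t) ≠ 1 := by
    have : Fact (1 < t) := ⟨ht⟩
    exact zero_ne_one
  refine ⟨girth_eq_four (a := (false, true, 0)) (b := (true, true, 0)) (c := (false, true, 1))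
      (d := (true, true, 1)) hbip (by simp) (by simp) (by simp) (by simp) (by simpa using h01)
      (by simpa using h01), fun p => ?_, ⟨(false, false, 0), by simp [hdeg]⟩,
      ⟨(false, true, 0), by simp [hdeg]⟩, ?_⟩
  · rw [hdeg]
    split_ifs <;> simp
  · have hset (b : Bool) :
        {p | deg (babiGraph t k) p = if b then 2 * t else t + k} = {p | p.2.1 = b} := by
      ext ⟨a, h, i⟩
      rw [Set.mem_ofPred_eq, hdeg]
      cases b <;> cases h <;> simp <;> omega
    have hr := hset false
    have hs := hset true
    simp only [Bool.false_eq_true, ↓reduceIte] at hr hs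
    rw [hr, hs]
    refine Set.ncard_congr (fun p _ => (p.1, !p.2.1, p.2.2)) ?_ ?_ ?_
    · simp
    · simp
    · rintro ⟨a, _, i⟩ rfl
      exact ⟨(a, false, i), rfl, rfl⟩

end babiGraph

end SimpleGraph

theorem stmt_13_general (r s : ℕ) (hrs : r < s) (h2r : s < 2 * r) (hse : Even s) :
    (∃ G : SimpleGraph (Fin (2 * s)), IsBabi r s 4 G) ∧
    (∀ (n : ℕ) (G : SimpleGraph (Fin n)), IsBabi r s 4 G → 2 * s ≤ n) := by
  refine ⟨?_, fun n G hG => by simpa using hG.two_mul_le_card hrs⟩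
  obtain ⟨t, rfl⟩ := hse
  have : NeZero t := ⟨by omega⟩
  obtain ⟨k, rfl⟩ : ∃ k, r = t + k := ⟨r - t, by omega⟩
  have hcard : Fintype.card (Bool × Bool × ZMod t) = 2 * (2 * t) := by simp
  rw [← two_mul]
  exact ⟨_, (babiGraph t k).overFinIso hcard |>.isBabi (isBabi_babiGraph (by omega) (by omega))⟩

/-- `n_bb(r,s;4) = 2s` when `2r > s` and `s` is even. -/
theorem stmt_13 (r s : ℕ) (hr : 2 ≤ r) (hrs : r < s) (h2r : s < 2 * r) (hse : Even s) :
    (∃ G : SimpleGraph (Fin (2 * s)), IsBabi r s 4 G) ∧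
    (∀ (n : ℕ) (G : SimpleGraph (Fin n)), IsBabi r s 4 G → 2 * s ≤ n) :=
  stmt_13_general r s hrs h2r hse
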